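/- For the Leibniz algebra L = sl_2 ∔ I with the multiplication table of Theorem 2.3, the ideal generated by squares equals the span of {x_0,...,x_m}, and the only ideals of L are 0, I, and L; moreover [L,L] ≠ I, so L is a simple Leibniz algebra. -/

import Mathlib

open Finset

/-- Basis index type: `Sum.inl 0 = e`, `Sum.inl 1 = f`, `Sum.inl 2 = h`,
`Sum.inr k = x_k`. -/
abbrev BasisIdx (m : ℕ) : Type := Fin 3 ⊕ Fin (m + 1)

/-- The underlying vector space of the `(m+4)`-dimensional algebra. -/
def Lm (m : ℕ) : Type := BasisIdx m → ℂ

noncomputable instance (m : ℕ) : AddCommGroup (Lm m) := Pi.addCommGroup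
noncomputable instance (m : ℕ) : Module ℂ (Lm m) := Pi.module _ _ _
instance (m : ℕ) : FiniteDimensional ℂ (Lm m) := Module.Finite.pi (ι := BasisIdx m)

/-- The basis vectors. -/
noncomputable def bas (m : ℕ) (i : BasisIdx m) : Lm m := Pi.single i 1

/-- Structure constants of the simple Leibniz algebra with associated Lie algebra
`sl₂`:  `[x_k,e] = -k(m+1-k)x_{k-1}`, `[x_k,f] = x_{k+1}`, `[x_k,h] = (m-2k)x_k`,
`[e,h] = 2e = -[h,e]`, `[h,f] = 2f = -[f,h]`, `[e,f] = h = -[f,e]`,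
all other products of basis vectors being zero. -/
noncomputable def sc (m : ℕ) : BasisIdx m → BasisIdx m → Lm m
  | Sum.inr k, Sum.inl ⟨0, _⟩ =>
      (-((k : ℂ) * ((m : ℂ) + 1 - (k : ℂ)))) •
        bas m (Sum.inr ⟨(k : ℕ) - 1, Nat.lt_of_le_of_lt (Nat.sub_le _ _) k.isLt⟩)
  | Sum.inr k, Sum.inl ⟨1, _⟩ =>
      if h : (k : ℕ) < m then bas m (Sum.inr ⟨(k : ℕ) + 1, by omega⟩) else 0
  | Sum.inr k, Sum.inl ⟨2, _⟩ => ((m : ℂ) - 2 * (k : ℂ)) • bas m (Sum.inr k)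
  | Sum.inl ⟨0, _⟩, Sum.inl ⟨2, _⟩ => (2 : ℂ) • bas m (Sum.inl 0)
  | Sum.inl ⟨2, _⟩, Sum.inl ⟨0, _⟩ => (-2 : ℂ) • bas m (Sum.inl 0)
  | Sum.inl ⟨2, _⟩, Sum.inl ⟨1, _⟩ => (2 : ℂ) • bas m (Sum.inl 1)
  | Sum.inl ⟨1, _⟩, Sum.inl ⟨2, _⟩ => (-2 : ℂ) • bas m (Sum.inl 1)
  | Sum.inl ⟨0, _⟩, Sum.inl ⟨1, _⟩ => bas m (Sum.inl 2)
  | Sum.inl ⟨1, _⟩, Sum.inl ⟨0, _⟩ => -bas m (Sum.inl 2)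
  | _, _ => 0

/-- The bilinear bracket of the algebra, extended from the structure constants. -/
noncomputable def br (m : ℕ) (x y : Lm m) : Lm m :=
  ∑ i : BasisIdx m, ∑ j : BasisIdx m, (x i * y j) • sc m i j

/-!
The squares span `I = span {x_k}`: the `sl₂`-components of `[x, x]` cancel, and
`[x₀ + h, x₀ + h] = m x₀ ≠ 0`. Right multiplication by `f` shifts `x_k` to `x_{k+1}`, and right
multiplication by `e` sends `x_{k+1}` to a nonzero multiple of `x_k`, so an ideal meeting `I`
nontrivially contains `I`. An ideal not contained in `I` contains some `c` with nonzero
`h`-coordinate; then `[x₀, c]` is a nonzero element of `I`, so the ideal contains `I`. Since `ad h`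
acts on `e, f, h` with eigenvalues `2, -2, 0`, `c - ¼ [[c, h], h] ≡ c_h h` modulo `I`, which gives
`h`, hence `e` and `f`. Finally `h = [e, f]` lies in `[L, L]` but not in `I`.
-/

namespace Lm

variable {m : ℕ}

@[simp] lemma add_apply (v w : Lm m) (p : BasisIdx m) : (v + w) p = v p + w p := rfl
@[simp] lemma sub_apply (v w : Lm m) (p : BasisIdx m) : (v - w) p = v p - w p := rfl
@[simp] lemma smul_apply (c : ℂ) (v : Lm m) (p : BasisIdx m) : (c • v) p = c * v p := rfl
@[simp] lemma neg_apply (v : Lm m) (p : BasisIdx m) : (-v) p = -v p := rfl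
@[simp] lemma zero_apply (p : BasisIdx m) : (0 : Lm m) p = 0 := rfl

lemma sum_apply {ι : Type*} (s : Finset ι) (v : ι → Lm m) (p : BasisIdx m) :
    (∑ i ∈ s, v i) p = ∑ i ∈ s, v i p :=
  Finset.sum_apply p s v

lemma bas_apply (i p : BasisIdx m) : bas m i p = if p = i then 1 else 0 :=
  Pi.single_apply i 1 p

@[ext] lemma ext {v w : Lm m} (hl : ∀ j, v (Sum.inl j) = w (Sum.inl j))
    (hr : ∀ k, v (Sum.inr k) = w (Sum.inr k)) : v = w :=
  funext fun | Sum.inl j => hl j | Sum.inr k => hr k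

@[simp] lemma sc_e_e : sc m (Sum.inl 0) (Sum.inl 0) = 0 := rfl
@[simp] lemma sc_e_f : sc m (Sum.inl 0) (Sum.inl 1) = bas m (Sum.inl 2) := rfl
@[simp] lemma sc_e_h : sc m (Sum.inl 0) (Sum.inl 2) = (2 : ℂ) • bas m (Sum.inl 0) := rfl
@[simp] lemma sc_f_e : sc m (Sum.inl 1) (Sum.inl 0) = -bas m (Sum.inl 2) := rfl
@[simp] lemma sc_f_f : sc m (Sum.inl 1) (Sum.inl 1) = 0 := rfl
@[simp] lemma sc_f_h : sc m (Sum.inl 1) (Sum.inl 2) = (-2 : ℂ) • bas m (Sum.inl 1) := rfl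
@[simp] lemma sc_h_e : sc m (Sum.inl 2) (Sum.inl 0) = (-2 : ℂ) • bas m (Sum.inl 0) := rfl
@[simp] lemma sc_h_f : sc m (Sum.inl 2) (Sum.inl 1) = (2 : ℂ) • bas m (Sum.inl 1) := rfl
@[simp] lemma sc_h_h : sc m (Sum.inl 2) (Sum.inl 2) = 0 := rfl

lemma sc_x_e (k : Fin (m + 1)) : sc m (Sum.inr k) (Sum.inl 0) =
    (-((k : ℂ) * ((m : ℂ) + 1 - (k : ℂ)))) •
      bas m (Sum.inr ⟨(k : ℕ) - 1, Nat.lt_of_le_of_lt (Nat.sub_le _ _) k.isLt⟩) := rfl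

lemma sc_x_f (k : Fin (m + 1)) : sc m (Sum.inr k) (Sum.inl 1) =
    if h : (k : ℕ) < m then bas m (Sum.inr ⟨(k : ℕ) + 1, by omega⟩) else 0 := rfl

lemma sc_x_h (k : Fin (m + 1)) :
    sc m (Sum.inr k) (Sum.inl 2) = ((m : ℂ) - 2 * (k : ℂ)) • bas m (Sum.inr k) := rfl

@[simp] lemma sc_inr_right (i : BasisIdx m) (k : Fin (m + 1)) : sc m i (Sum.inr k) = 0 := by
  rcases i with ⟨_ | _ | _ | _, _⟩ | _ <;> rfl

@[simp] lemma sc_inr_apply_inl (k : Fin (m + 1)) (j l : Fin 3) :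
    sc m (Sum.inr k) (Sum.inl j) (Sum.inl l) = 0 := by
  fin_cases j
  · simp [sc_x_e, bas_apply]
  · by_cases hk : (k : ℕ) < m <;> simp [sc_x_f, hk, bas_apply]
  · simp [sc_x_h, bas_apply]

lemma sc_x_f_apply_zero (k : Fin (m + 1)) : sc m (Sum.inr k) (Sum.inl 1) (Sum.inr 0) = 0 := by
  rw [sc_x_f]
  split_ifs
  · rw [bas_apply, if_neg (by simp only [Sum.inr.injEq, Fin.ext_iff]; simp)]
  · rfl

lemma sc_x_f_apply_succ (k : Fin (m + 1)) (j : Fin m) :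
    sc m (Sum.inr k) (Sum.inl 1) (Sum.inr j.succ) = if k = j.castSucc then 1 else 0 := by
  rw [sc_x_f]; split_ifs <;> simp_all [bas_apply, Fin.ext_iff]; omega

lemma br_apply (x y : Lm m) (p : BasisIdx m) :
    br m x y p = ∑ i, ∑ j, x i * y j * sc m i j p := by
  simp only [br, sum_apply, smul_apply]

lemma br_add_left (x y z : Lm m) : br m (x + y) z = br m x z + br m y z := by
  simp only [br, add_apply, add_mul, add_smul, Finset.sum_add_distrib]

lemma br_add_right (x y z : Lm m) : br m x (y + z) = br m x y + br m x z := by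
  simp only [br, add_apply, mul_add, add_smul, Finset.sum_add_distrib]

lemma br_bas_bas (i j : BasisIdx m) : br m (bas m i) (bas m j) = sc m i j := by
  simp [br, bas_apply]

lemma br_apply_e (x y : Lm m) : br m x y (Sum.inl 0) =
    2 * x (Sum.inl 0) * y (Sum.inl 2) - 2 * x (Sum.inl 2) * y (Sum.inl 0) := by
  simp only [br_apply, Fintype.sum_sum_type, Fin.sum_univ_three, sc_inr_right, sc_inr_apply_inl,
    sc_e_e, sc_e_f, sc_e_h, sc_f_e, sc_f_f, sc_f_h, sc_h_e, sc_h_f, sc_h_h, zero_apply, neg_apply,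
    smul_apply, bas_apply, Sum.inl.injEq, Fin.reduceEq, Fin.isValue, ↓reduceIte, mul_zero,
    Finset.sum_const_zero, add_zero]
  ring

lemma br_apply_f (x y : Lm m) : br m x y (Sum.inl 1) =
    2 * x (Sum.inl 2) * y (Sum.inl 1) - 2 * x (Sum.inl 1) * y (Sum.inl 2) := by
  simp only [br_apply, Fintype.sum_sum_type, Fin.sum_univ_three, sc_inr_right, sc_inr_apply_inl,
    sc_e_e, sc_e_f, sc_e_h, sc_f_e, sc_f_f, sc_f_h, sc_h_e, sc_h_f, sc_h_h, zero_apply, neg_apply,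
    smul_apply, bas_apply, Sum.inl.injEq, Fin.reduceEq, Fin.isValue, ↓reduceIte, mul_zero,
    Finset.sum_const_zero, add_zero]
  ring

lemma br_apply_h (x y : Lm m) : br m x y (Sum.inl 2) =
    x (Sum.inl 0) * y (Sum.inl 1) - x (Sum.inl 1) * y (Sum.inl 0) := by
  simp only [br_apply, Fintype.sum_sum_type, Fin.sum_univ_three, sc_inr_right, sc_inr_apply_inl,
    sc_e_e, sc_e_f, sc_e_h, sc_f_e, sc_f_f, sc_f_h, sc_h_e, sc_h_f, sc_h_h, zero_apply, neg_apply,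
    smul_apply, bas_apply, Sum.inl.injEq, Fin.reduceEq, Fin.isValue, ↓reduceIte, mul_zero,
    Finset.sum_const_zero, add_zero]
  ring

noncomputable def xSpan (m : ℕ) : Submodule ℂ (Lm m) :=
  Submodule.span ℂ (Set.range fun k : Fin (m + 1) => bas m (Sum.inr k))

lemma mem_xSpan_iff {a : Lm m} : a ∈ xSpan m ↔ ∀ j, a (Sum.inl j) = 0 := by
  constructor
  · intro ha j
    induction ha using Submodule.span_induction with
    | mem x hx => obtain ⟨k, rfl⟩ := hx; simp [bas_apply]
    | zero => rfl
    | add x y _ _ hx hy => simp [hx, hy]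
    | smul c x _ hx => simp [hx]
  · intro ha
    have : a = ∑ k, a (Sum.inr k) • bas m (Sum.inr k) := by
      ext p <;> simp [sum_apply, bas_apply, ha]
    rw [this]
    exact Submodule.sum_mem _ fun k _ => Submodule.smul_mem _ _ (Submodule.subset_span ⟨k, rfl⟩)

lemma mem_xSpan_of_apply {a : Lm m} (h0 : a (Sum.inl 0) = 0) (h1 : a (Sum.inl 1) = 0)
    (h2 : a (Sum.inl 2) = 0) : a ∈ xSpan m :=
  mem_xSpan_iff.mpr fun j => by fin_cases j; exacts [h0, h1, h2]

lemma br_mem_xSpan_of_left {a : Lm m} (ha : a ∈ xSpan m) (y : Lm m) : br m a y ∈ xSpan m := by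
  rw [mem_xSpan_iff] at ha
  exact mem_xSpan_of_apply (by simp [br_apply_e, ha]) (by simp [br_apply_f, ha])
    (by simp [br_apply_h, ha])

lemma br_eq_zero_of_mem_xSpan {a : Lm m} (ha : a ∈ xSpan m) (y : Lm m) : br m y a = 0 := by
  rw [mem_xSpan_iff] at ha
  simp [br, Fintype.sum_sum_type, ha]

lemma br_self_mem_xSpan (x : Lm m) : br m x x ∈ xSpan m :=
  mem_xSpan_of_apply (by rw [br_apply_e]; ring) (by rw [br_apply_f]; ring)
    (by rw [br_apply_h]; ring)

def IsLeibnizIdeal (J : Submodule ℂ (Lm m)) : Prop :=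
  ∀ a ∈ J, ∀ y, br m a y ∈ J ∧ br m y a ∈ J

lemma isLeibnizIdeal_xSpan : IsLeibnizIdeal (xSpan m) := fun a ha y =>
  ⟨br_mem_xSpan_of_left ha y, by rw [br_eq_zero_of_mem_xSpan ha]; exact zero_mem _⟩

lemma br_f_apply_zero {a : Lm m} (ha : a ∈ xSpan m) :
    br m a (bas m (Sum.inl 1)) (Sum.inr 0) = 0 := by
  rw [mem_xSpan_iff] at ha
  simp [br_apply, Fintype.sum_sum_type, ha, bas_apply, sc_x_f_apply_zero]

lemma br_f_apply_succ {a : Lm m} (ha : a ∈ xSpan m) (k : Fin m) :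
    br m a (bas m (Sum.inl 1)) (Sum.inr k.succ) = a (Sum.inr k.castSucc) := by
  rw [mem_xSpan_iff] at ha
  simp [br_apply, Fintype.sum_sum_type, ha, bas_apply, sc_x_f_apply_succ]

lemma bas_last_mem_of_mem {J : Submodule ℂ (Lm m)} (hJ : IsLeibnizIdeal J) {a : Lm m}
    (haJ : a ∈ J) (ha : a ∈ xSpan m) (ha0 : a ≠ 0) : bas m (Sum.inr (Fin.last m)) ∈ J := by
  -- push the lowest nonzero coordinate of `a` up to `x_m` by right multiplication with `f`
  suffices H : ∀ k : Fin (m + 1), ∀ a ∈ J, a ∈ xSpan m → a ≠ 0 →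
      (∀ l < k, a (Sum.inr l) = 0) → bas m (Sum.inr (Fin.last m)) ∈ J from
    H 0 a haJ ha ha0 fun l hl => absurd hl (Fin.not_lt_zero l)
  intro k
  induction k using Fin.reverseInduction with
  | last =>
    intro a haJ ha ha0 hlow
    have ha_eq : a = a (Sum.inr (Fin.last m)) • bas m (Sum.inr (Fin.last m)) := by
      rw [mem_xSpan_iff] at ha
      ext p
      · simp [ha, bas_apply]
      · by_cases hp : p = Fin.last m
        · simp [hp, bas_apply]
        · simp [hlow p (Fin.lt_last_iff_ne_last.mpr hp), bas_apply, hp]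
    have hlast : a (Sum.inr (Fin.last m)) ≠ 0 := fun h => ha0 (by rw [ha_eq, h, zero_smul])
    rwa [ha_eq, Submodule.smul_mem_iff _ hlast] at haJ
  | cast k ih =>
    intro a haJ ha ha0 hlow
    by_cases hak : a (Sum.inr k.castSucc) = 0
    · refine ih a haJ ha ha0 fun l hl => ?_
      rcases (Fin.le_castSucc_iff.mpr hl).lt_or_eq with hl | rfl
      exacts [hlow l hl, hak]
    · refine ih _ (hJ a haJ _).1 (br_mem_xSpan_of_left ha _)
        (fun h => hak (by rw [← br_f_apply_succ ha, h, zero_apply])) fun l hl => ?_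
      induction l using Fin.cases with
      | zero => exact br_f_apply_zero ha
      | succ l =>
        rw [br_f_apply_succ ha]
        exact hlow _ (Fin.castSucc_lt_castSucc_iff.mpr (Fin.succ_lt_succ_iff.mp hl))

lemma br_bas_succ_e (k : Fin m) :
    br m (bas m (Sum.inr k.succ)) (bas m (Sum.inl 0)) =
      (-(((k : ℂ) + 1) * ((m : ℂ) - k))) • bas m (Sum.inr k.castSucc) := by
  rw [br_bas_bas, sc_x_e]
  congr 2
  simp

lemma xSpan_le_of_bas_last_mem {J : Submodule ℂ (Lm m)} (hJ : IsLeibnizIdeal J)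
    (h : bas m (Sum.inr (Fin.last m)) ∈ J) : xSpan m ≤ J := by
  rw [xSpan, Submodule.span_le]
  rintro _ ⟨k, rfl⟩
  induction k using Fin.reverseInduction with
  | last => exact h
  | cast k ih =>
    have hc : -(((k : ℂ) + 1) * ((m : ℂ) - k)) ≠ 0 := by
      have hk : (m : ℂ) ≠ k := Nat.cast_injective.ne k.isLt.ne'
      exact neg_ne_zero.mpr (mul_ne_zero (Nat.cast_add_one_ne_zero k) (sub_ne_zero.mpr hk))
    have := (hJ _ ih (bas m (Sum.inl 0))).1
    rwa [br_bas_succ_e, Submodule.smul_mem_iff _ hc] at this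

lemma xSpan_le_of_mem {J : Submodule ℂ (Lm m)} (hJ : IsLeibnizIdeal J) {a : Lm m}
    (haJ : a ∈ J) (ha : a ∈ xSpan m) (ha0 : a ≠ 0) : xSpan m ≤ J :=
  xSpan_le_of_bas_last_mem hJ (bas_last_mem_of_mem hJ haJ ha ha0)

lemma bas_inl_not_mem_xSpan (j : Fin 3) : bas m (Sum.inl j) ∉ xSpan m := by
  simp [mem_xSpan_iff, bas_apply]

lemma sub_br_br_h_sub_mem_xSpan (c : Lm m) :
    c - (4 : ℂ)⁻¹ • br m (br m c (bas m (Sum.inl 2))) (bas m (Sum.inl 2))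
      - c (Sum.inl 2) • bas m (Sum.inl 2) ∈ xSpan m := by
  refine mem_xSpan_of_apply ?_ ?_ ?_ <;>
    simp only [sub_apply, smul_apply, br_apply_e, br_apply_f, br_apply_h, bas_apply,
      Sum.inl.injEq, Fin.reduceEq, Fin.isValue, ↓reduceIte] <;>
    ring

lemma eq_top_of_h_mem {J : Submodule ℂ (Lm m)} (hJ : IsLeibnizIdeal J) (hI : xSpan m ≤ J)
    (hh : bas m (Sum.inl 2) ∈ J) : J = ⊤ := by
  have he : bas m (Sum.inl 0) ∈ J := by
    have := (hJ _ hh (bas m (Sum.inl 0))).2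
    rwa [br_bas_bas, sc_e_h, Submodule.smul_mem_iff _ two_ne_zero] at this
  have hf : bas m (Sum.inl 1) ∈ J := by
    have := (hJ _ hh (bas m (Sum.inl 1))).2
    rwa [br_bas_bas, sc_f_h, Submodule.smul_mem_iff _ (by norm_num)] at this
  refine eq_top_iff.mpr fun x _ => ?_
  set y := x (Sum.inl 0) • bas m (Sum.inl 0) + x (Sum.inl 1) • bas m (Sum.inl 1)
      + x (Sum.inl 2) • bas m (Sum.inl 2)
  have hx : x - y ∈ J :=
    hI (mem_xSpan_of_apply (by simp [y, bas_apply]) (by simp [y, bas_apply])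
      (by simp [y, bas_apply]))
  rw [← sub_add_cancel x y]
  exact add_mem hx (add_mem (add_mem (J.smul_mem _ he) (J.smul_mem _ hf)) (J.smul_mem _ hh))

lemma exists_mem_apply_h_ne_zero {J : Submodule ℂ (Lm m)} (hJ : IsLeibnizIdeal J) {b : Lm m}
    (hbJ : b ∈ J) (hb : b ∉ xSpan m) : ∃ c ∈ J, c (Sum.inl 2) ≠ 0 := by
  obtain ⟨j, hj⟩ : ∃ j, b (Sum.inl j) ≠ 0 := by simpa [mem_xSpan_iff] using hb
  fin_cases j
  · exact ⟨_, (hJ b hbJ (bas m (Sum.inl 1))).1, by simpa [br_apply_h, bas_apply] using hj⟩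
  · exact ⟨_, (hJ b hbJ (bas m (Sum.inl 0))).2, by simpa [br_apply_h, bas_apply] using hj⟩
  · exact ⟨b, hbJ, hj⟩

lemma br_bas_zero_apply_zero (c : Lm m) :
    br m (bas m (Sum.inr 0)) c (Sum.inr 0) = m * c (Sum.inl 2) := by
  simp [br_apply, Fintype.sum_sum_type, Fin.sum_univ_three, bas_apply, sc_x_e, sc_x_f_apply_zero,
    sc_x_h, mul_comm]

lemma eq_top_of_not_le_xSpan (hm : m ≠ 0) {J : Submodule ℂ (Lm m)} (hJ : IsLeibnizIdeal J)
    (hJI : ¬J ≤ xSpan m) : J = ⊤ := by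
  obtain ⟨b, hbJ, hb⟩ := Set.not_subset.mp hJI
  obtain ⟨c, hcJ, hc⟩ := exists_mem_apply_h_ne_zero hJ hbJ hb
  have hI : xSpan m ≤ J := by
    have hx0 : bas m (Sum.inr 0) ∈ xSpan m := Submodule.subset_span ⟨0, rfl⟩
    refine xSpan_le_of_mem hJ (hJ c hcJ _).2 (br_mem_xSpan_of_left hx0 c) fun h => ?_
    have := br_bas_zero_apply_zero c
    rw [h, zero_apply] at this
    exact mul_ne_zero (Nat.cast_ne_zero.mpr hm) hc this.symm
  have hc1 := (hJ c hcJ (bas m (Sum.inl 2))).1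
  have hc2 := (hJ _ hc1 (bas m (Sum.inl 2))).1
  have hh := sub_mem (sub_mem hcJ (J.smul_mem (4 : ℂ)⁻¹ hc2)) (hI (sub_br_br_h_sub_mem_xSpan c))
  rw [sub_sub_cancel, Submodule.smul_mem_iff _ hc] at hh
  exact eq_top_of_h_mem hJ hI hh

lemma eq_bot_or_eq_xSpan_or_eq_top (hm : m ≠ 0) {J : Submodule ℂ (Lm m)}
    (hJ : IsLeibnizIdeal J) : J = ⊥ ∨ J = xSpan m ∨ J = ⊤ := by
  by_cases hJI : J ≤ xSpan m
  · by_cases hbot : J = ⊥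
    · exact Or.inl hbot
    · obtain ⟨a, haJ, ha0⟩ := Submodule.exists_mem_ne_zero_of_ne_bot hbot
      exact Or.inr (Or.inl (le_antisymm hJI (xSpan_le_of_mem hJ haJ (hJI haJ) ha0)))
  · exact Or.inr (Or.inr (eq_top_of_not_le_xSpan hm hJ hJI))

lemma br_self_bas_zero_add_h :
    br m (bas m (Sum.inr 0) + bas m (Sum.inl 2)) (bas m (Sum.inr 0) + bas m (Sum.inl 2)) =
      (m : ℂ) • bas m (Sum.inr 0) := by
  simp [br_add_left, br_add_right, br_bas_bas, sc_x_h]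

lemma xSpan_le_of_forall_br_self_mem (hm : m ≠ 0) {J : Submodule ℂ (Lm m)}
    (hJ : IsLeibnizIdeal J) (hsq : ∀ x, br m x x ∈ J) : xSpan m ≤ J := by
  have hx0 : bas m (Sum.inr 0) ∈ xSpan m := Submodule.subset_span ⟨0, rfl⟩
  have := hsq (bas m (Sum.inr 0) + bas m (Sum.inl 2))
  rw [br_self_bas_zero_add_h] at this
  exact xSpan_le_of_mem hJ this (Submodule.smul_mem _ _ hx0)
    (smul_ne_zero (Nat.cast_ne_zero.mpr hm) fun h => by
      simpa [bas_apply] using congrFun h (Sum.inr 0))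

end Lm

open Lm

/-- For the algebra `L = sl₂ ∔ I` of Theorem 2.3, the ideal generated by squares
equals `I = span{x_0,…,x_m}`, the only ideals of `L` are `0`, `I` and `L`, and
`[L,L] ≠ I`; hence `L` is a simple Leibniz algebra. -/
theorem stmt6 (m : ℕ) (hm : 2 ≤ m) :
    let Isub : Submodule ℂ (Lm m) :=
      Submodule.span ℂ (Set.range fun k : Fin (m + 1) => bas m (Sum.inr k))
    let IsIdeal : Submodule ℂ (Lm m) → Prop := fun J =>
      ∀ a ∈ J, ∀ y : Lm m, br m a y ∈ J ∧ br m y a ∈ J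
    sInf {J : Submodule ℂ (Lm m) | IsIdeal J ∧ ∀ x : Lm m, br m x x ∈ J} = Isub ∧
      (∀ J : Submodule ℂ (Lm m), IsIdeal J → J = ⊥ ∨ J = Isub ∨ J = ⊤) ∧
      Submodule.span ℂ {a : Lm m | ∃ x y : Lm m, a = br m x y} ≠ Isub := by
  intro Isub IsIdeal
  have hm0 : m ≠ 0 := by omega
  refine ⟨?_, fun J hJ => eq_bot_or_eq_xSpan_or_eq_top hm0 hJ, fun hEq => ?_⟩
  · exact le_antisymm (sInf_le ⟨isLeibnizIdeal_xSpan, br_self_mem_xSpan⟩)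
      (le_sInf fun J ⟨hJ, hsq⟩ => xSpan_le_of_forall_br_self_mem hm0 hJ hsq)
  · have hh : br m (bas m (Sum.inl 0)) (bas m (Sum.inl 1)) ∈ Isub :=
      hEq ▸ Submodule.subset_span ⟨_, _, rfl⟩
    rw [br_bas_bas, sc_e_f] at hh
    exact bas_inl_not_mem_xSpan 2 hh
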